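/- Let G be a finite group whose power graph is a cograph. If {q, p} with q < p is an edge of the prime graph of G (i.e., G contains an element of order pq), then the Sylow p-subgroups of G are cyclic of order p. -/

import Mathlib

/-!
Let `g` have order `pq` and put `x = g ^ q`, `y = g ^ p`. When the power graph is a cograph,
two elements of the same order centralised by a common element `c` of coprime order generate the
same cyclic subgroup (otherwise `a — ca — c — cb` is an induced `P₄`), and `⟨x⟩` lies in no
larger cyclic subgroup of order prime to `q` (otherwise `z — x — xy — y` is one). If a Sylow
`p`-subgroup containing `x` had order larger than `p`, the centre of that `p`-group would provide
some `z` of order `p` outside `⟨x⟩` commuting with `x`. Then `x` centralises both `y` and `zyz⁻¹`,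
so `z` normalises `⟨y⟩`; as `p > q`, `p` does not divide `q - 1 = |Aut ⟨y⟩|`, so `z` centralises
`y`. Now `y` centralises both `x` and `z`, which forces `z ∈ ⟨x⟩`.
-/

/-- The power graph of a group: `g` and `h` are adjacent iff they are distinct and
one is a power (integer power) of the other. -/
def powerGraph (G : Type*) [Group G] : SimpleGraph G where
  Adj g h := g ≠ h ∧ (h ∈ Subgroup.zpowers g ∨ g ∈ Subgroup.zpowers h)
  symm := ⟨fun g h ⟨hne, hor⟩ => ⟨hne.symm, hor.symm⟩⟩
  loopless := ⟨fun g h => h.1 rfl⟩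

/-- `a, b, c, d` induce a path on four vertices in `Γ`. -/
def InducedP4 {V : Type*} (Γ : SimpleGraph V) (a b c d : V) : Prop :=
  a ≠ c ∧ a ≠ d ∧ b ≠ d ∧ Γ.Adj a b ∧ Γ.Adj b c ∧ Γ.Adj c d ∧
    ¬Γ.Adj a c ∧ ¬Γ.Adj a d ∧ ¬Γ.Adj b d

/-- A graph is a cograph iff it has no induced `P4`. -/
def IsCograph {V : Type*} (Γ : SimpleGraph V) : Prop :=
  ∀ a b c d : V, ¬ InducedP4 Γ a b c d

/-- The prime graph (Gruenberg–Kegel graph) of a group, as a graph on `ℕ`. -/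
def primeGraph (G : Type*) [Group G] : SimpleGraph ℕ where
  Adj p q := p ≠ q ∧ p.Prime ∧ q.Prime ∧ ∃ g : G, orderOf g = p * q
  symm := ⟨fun p q ⟨hne, hp, hq, g, hg⟩ => ⟨hne.symm, hq, hp, g, by rwa [Nat.mul_comm]⟩⟩
  loopless := ⟨fun p h => h.1 rfl⟩

open Subgroup

theorem Nat.exists_dvd_and_modEq_one {m n : ℕ} (h : m.Coprime n) :
    ∃ N, m ∣ N ∧ N ≡ 1 [MOD n] :=
  let N := Nat.chineseRemainder h 0 1
  ⟨N, Nat.modEq_zero_iff_dvd.1 N.2.1, N.2.2⟩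

theorem exists_commute_orderOf_eq_of_orderOf_eq_mul {G : Type*} [Monoid G] {g : G} {m n : ℕ}
    (hg : orderOf g = m * n) (hm : m ≠ 0) (hn : n ≠ 0) :
    ∃ x y : G, orderOf x = m ∧ orderOf y = n ∧ Commute x y :=
  ⟨g ^ n, g ^ m,
    by rw [orderOf_pow_of_dvd hn (hg ▸ dvd_mul_left n m), hg, Nat.mul_div_cancel _ (by omega)],
    by rw [orderOf_pow_of_dvd hm (hg ▸ dvd_mul_right m n), hg,
      Nat.mul_div_cancel_left _ (by omega)],
    Commute.pow_pow_self g n m⟩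

section

variable {G : Type*} [Group G]

theorem pow_eq_self_of_modEq_one {a : G} {N : ℕ} (h : N ≡ 1 [MOD orderOf a]) : a ^ N = a := by
  conv_rhs => rw [← pow_one a]
  exact pow_eq_pow_iff_modEq.2 h

theorem pow_mem_zpowers_pow {a g : G} (h : a ∈ zpowers g) (N : ℕ) : a ^ N ∈ zpowers (g ^ N) := by
  obtain ⟨k, rfl⟩ := mem_zpowers_iff.1 h
  refine mem_zpowers_iff.2 ⟨k, ?_⟩
  simp only [← zpow_natCast, ← zpow_mul, mul_comm]

theorem Commute.mem_zpowers_mul_right {b c : G} (h : Commute c b)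
    (hcop : (orderOf c).Coprime (orderOf b)) : b ∈ zpowers (c * b) := by
  obtain ⟨N, hcN, hN⟩ := Nat.exists_dvd_and_modEq_one hcop
  have hcbN : (c * b) ^ N = b := by
    rw [h.mul_pow, orderOf_dvd_iff_pow_eq_one.1 hcN, one_mul, pow_eq_self_of_modEq_one hN]
  simpa only [hcbN] using npow_mem_zpowers (c * b) N

theorem Commute.mem_zpowers_mul_left {b c : G} (h : Commute c b)
    (hcop : (orderOf c).Coprime (orderOf b)) : c ∈ zpowers (c * b) :=
  h.eq ▸ h.symm.mem_zpowers_mul_right hcop.symm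

theorem Commute.mem_zpowers_of_mem_zpowers_mul {a b c : G} (h : Commute c b)
    (hcop : (orderOf c).Coprime (orderOf a)) (ha : a ∈ zpowers (c * b)) : a ∈ zpowers b := by
  obtain ⟨N, hcN, hN⟩ := Nat.exists_dvd_and_modEq_one hcop
  have hcbN : (c * b) ^ N = b ^ N := by
    rw [h.mul_pow, orderOf_dvd_iff_pow_eq_one.1 hcN, one_mul]
  have := pow_mem_zpowers_pow ha N
  rw [pow_eq_self_of_modEq_one hN, hcbN] at this
  exact zpowers_le.2 (npow_mem_zpowers b N) this

theorem eq_one_of_mem_zpowers_of_coprime {a b : G} (hcop : (orderOf a).Coprime (orderOf b))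
    (h : a ∈ zpowers b) : a = 1 :=
  orderOf_eq_one_iff.1 (hcop.eq_one_of_dvd (orderOf_dvd_of_mem_zpowers h))

theorem mem_zpowers_of_mem_zpowers_of_orderOf_eq [Finite G] {a b : G} (h : b ∈ zpowers a)
    (hab : orderOf a = orderOf b) : a ∈ zpowers b := by
  have hle : zpowers b ≤ zpowers a := zpowers_le.2 h
  rw [eq_of_le_of_card_ge hle (by rw [Nat.card_zpowers, Nat.card_zpowers, hab])]
  exact mem_zpowers a

theorem powerGraph_not_adj_of_coprime {a b : G} (hcop : (orderOf a).Coprime (orderOf b))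
    (ha : a ≠ 1) (hb : b ≠ 1) : ¬ (powerGraph G).Adj a b := by
  rintro ⟨-, h | h⟩
  · exact hb (eq_one_of_mem_zpowers_of_coprime hcop.symm h)
  · exact ha (eq_one_of_mem_zpowers_of_coprime hcop h)

theorem IsCograph.mem_zpowers_of_commute [Finite G] (hco : IsCograph (powerGraph G))
    {a b c : G} (hca : Commute c a) (hcb : Commute c b) (hab : orderOf a = orderOf b)
    (hcop : (orderOf c).Coprime (orderOf a)) (ha : a ≠ 1) (hc : c ≠ 1) : a ∈ zpowers b := by
  by_contra hnot
  have hcop' : (orderOf c).Coprime (orderOf b) := hab ▸ hcop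
  have hb : b ≠ 1 := by rwa [Ne, ← orderOf_eq_one_iff, ← hab, orderOf_eq_one_iff]
  have ha_ca : a ∈ zpowers (c * a) := hca.mem_zpowers_mul_right hcop
  have hc_ca : c ∈ zpowers (c * a) := hca.mem_zpowers_mul_left hcop
  have hc_cb : c ∈ zpowers (c * b) := hcb.mem_zpowers_mul_left hcop'
  have hb_cb : b ∈ zpowers (c * b) := hcb.mem_zpowers_mul_right hcop'
  have hc_notin_a : c ∉ zpowers a := fun h => hc (eq_one_of_mem_zpowers_of_coprime hcop h)
  have ha_notin_cb : a ∉ zpowers (c * b) :=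
    fun h => hnot (hcb.mem_zpowers_of_mem_zpowers_mul hcop h)
  have hb_notin_ca : b ∉ zpowers (c * a) :=
    fun h => hnot (mem_zpowers_of_mem_zpowers_of_orderOf_eq
      (hca.mem_zpowers_of_mem_zpowers_mul hcop' h) hab)
  refine hco a (c * a) c (c * b) ⟨?_, ?_, ?_, ⟨?_, Or.inr ha_ca⟩, ⟨?_, Or.inl hc_ca⟩,
    ⟨?_, Or.inr hc_cb⟩, powerGraph_not_adj_of_coprime hcop.symm ha hc, ?_, ?_⟩
  · rintro rfl
    exact hc_notin_a (mem_zpowers _)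
  · rintro rfl
    exact hc_notin_a hc_cb
  · intro h
    exact hnot (mul_left_cancel h ▸ mem_zpowers b)
  · exact fun h => hc (right_eq_mul.1 h)
  · exact fun h => ha (mul_eq_left.1 h)
  · exact fun h => hb (left_eq_mul.1 h)
  · rintro ⟨-, h | h⟩
    · exact hc_notin_a (zpowers_le.2 h hc_cb)
    · exact ha_notin_cb h
  · rintro ⟨-, h | h⟩
    · exact hb_notin_ca (zpowers_le.2 h hb_cb)
    · exact ha_notin_cb (zpowers_le.2 h ha_ca)

theorem IsCograph.mem_zpowers_of_mem_zpowers_of_commute (hco : IsCograph (powerGraph G))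
    {x y z : G} (hxy : Commute x y) (hcop : (orderOf x).Coprime (orderOf y))
    (hzy : (orderOf z).Coprime (orderOf y)) (hx : x ≠ 1) (hy : y ≠ 1) (hxz : x ∈ zpowers z) :
    z ∈ zpowers x := by
  by_contra hnot
  have hx_xy : x ∈ zpowers (x * y) := hxy.mem_zpowers_mul_left hcop
  have hy_xy : y ∈ zpowers (x * y) := hxy.mem_zpowers_mul_right hcop
  have hy_notin_z : y ∉ zpowers z := fun h => hy (eq_one_of_mem_zpowers_of_coprime hzy.symm h)
  have hz : z ≠ 1 := by
    rintro rfl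
    exact hx (by simpa using hxz)
  refine hco z x (x * y) y ⟨?_, ?_, ?_, ⟨?_, Or.inl hxz⟩, ⟨?_, Or.inr hx_xy⟩, ⟨?_, Or.inl hy_xy⟩,
    ?_, powerGraph_not_adj_of_coprime hzy hz hy, powerGraph_not_adj_of_coprime hcop hx hy⟩
  · rintro rfl
    exact hy_notin_z hy_xy
  · rintro rfl
    exact hy_notin_z (mem_zpowers _)
  · rintro rfl
    exact hx (eq_one_of_mem_zpowers_of_coprime hcop (mem_zpowers _))
  · rintro rfl
    exact hnot (mem_zpowers _)
  · exact fun h => hy (left_eq_mul.1 h)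
  · exact fun h => hx (mul_eq_right.1 h)
  · rintro ⟨-, h | h⟩
    · exact hy_notin_z (zpowers_le.2 h hy_xy)
    · exact hnot (hxy.symm.mem_zpowers_of_mem_zpowers_mul hzy.symm (hxy.eq ▸ h))

theorem Subgroup.coe_mem_zpowers_coe_iff {H : Subgroup G} {a b : H} :
    (a : G) ∈ zpowers (b : G) ↔ a ∈ zpowers b := by
  simp only [mem_zpowers_iff, ← coe_zpow, Subtype.ext_iff]

section Finite

variable [Finite G]

theorem commute_of_conj_mem_zpowers {y z : G} (h : z * y * z⁻¹ ∈ zpowers y)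
    (hcop : (orderOf z).Coprime (orderOf y).totient) : Commute z y := by
  obtain ⟨k, hk⟩ : ∃ k : ℕ, y ^ k = z * y * z⁻¹ := mem_powers_iff_mem_zpowers.2 h
  have hconj : ∀ j : ℕ, z ^ j * y * (z ^ j)⁻¹ = y ^ k ^ j := by
    intro j
    induction j with
    | zero => simp
    | succ j ih =>
      calc z ^ (j + 1) * y * (z ^ (j + 1))⁻¹ = z * (z ^ j * y * (z ^ j)⁻¹) * z⁻¹ := by group
        _ = y ^ k ^ (j + 1) := by rw [ih, ← conj_pow, ← hk, ← pow_mul, pow_succ']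
  -- conjugation by `z` acts on `⟨y⟩` as the `k`-th power map, so `y` is a periodic point of
  -- `(· ^ k)` of periods `orderOf z` and `φ (orderOf y)`, hence a fixed point
  have hper : ∀ n, Function.IsPeriodicPt (· ^ k) n y ↔ y ^ k ^ n = y := fun n => by
    rw [Function.IsPeriodicPt, Function.IsFixedPt, pow_iterate]
  have hz : Function.IsPeriodicPt (· ^ k) (orderOf z) y := by
    rw [hper, ← hconj, pow_orderOf_eq_one]
    group
  have hk_cop : k.Coprime (orderOf y) := by
    have hkz : k ^ orderOf z ≡ 1 [MOD orderOf y] := by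
      rw [← pow_eq_pow_iff_modEq, pow_one, ← hper]
      exact hz
    have := hkz.gcd_eq
    rwa [Nat.gcd_one_left, ← Nat.Coprime, Nat.coprime_pow_left_iff (orderOf_pos z)] at this
  have hy : Function.IsPeriodicPt (· ^ k) (orderOf y).totient y :=
    (hper _).2 (pow_eq_self_of_modEq_one (Nat.ModEq.pow_totient hk_cop))
  have hfix := hz.gcd hy
  rw [hcop.gcd_eq_one, hper, pow_one, hk] at hfix
  exact mul_inv_eq_iff_eq_mul.1 hfix

theorem IsPGroup.exists_commute_notMem_zpowers {p : ℕ} [Fact p.Prime] (hG : IsPGroup p G)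
    (hcard : Nat.card G ≠ p) {x : G} (hx : orderOf x = p)
    (hmax : ∀ u : G, x ∈ zpowers u → u ∈ zpowers x) :
    ∃ z, orderOf z = p ∧ Commute x z ∧ z ∉ zpowers x := by
  suffices ∃ u, Commute x u ∧ u ∉ zpowers x by
    obtain ⟨u, hxu, hu⟩ := this
    have hu1 : u ≠ 1 := fun h => hu (h ▸ one_mem _)
    have hz : orderOf (u ^ (orderOf u / p)) = p :=
      orderOf_pow_orderOf_div (orderOf_pos u).ne' (hG.dvd_orderOf hu1)
    refine ⟨_, hz, hxu.pow_right _, fun hzx => hu (hmax u ?_)⟩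
    exact zpowers_le.2 (npow_mem_zpowers u _)
      (mem_zpowers_of_mem_zpowers_of_orderOf_eq hzx (hx.trans hz.symm))
  -- if `x` is not central, a nontrivial central element cannot lie in `⟨x⟩`, which has prime order
  by_cases hxc : x ∈ center G
  · have hne : zpowers x ≠ ⊤ := fun h => hcard (by rw [← card_top, ← h, Nat.card_zpowers, hx])
    obtain ⟨u, -, hu⟩ := SetLike.exists_of_lt hne.lt_top
    exact ⟨u, (mem_center_iff.1 hxc u).symm, hu⟩
  · have : Nontrivial G := nontrivial_of_ne x 1 (orderOf_eq_prime_iff.1 hx).2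
    have := hG.center_nontrivial
    obtain ⟨w, hw⟩ := exists_ne (1 : center G)
    refine ⟨w, mem_center_iff.1 w.2 x, fun hwx => hxc ?_⟩
    have hwp : orderOf (w : G) = p :=
      ((Fact.out : p.Prime).eq_one_or_self_of_dvd _
        (hx ▸ orderOf_dvd_of_mem_zpowers hwx)).resolve_left
          fun h => hw (Subtype.ext (orderOf_eq_one_iff.1 h))
    exact zpowers_le.2 w.2 (mem_zpowers_of_mem_zpowers_of_orderOf_eq hwx (hx.trans hwp.symm))

theorem IsPGroup.exists_commute_notMem_zpowers_of_mem {p : ℕ} [Fact p.Prime] {H : Subgroup G}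
    (hH : IsPGroup p H) (hcard : Nat.card H ≠ p) {x : G}
    (hxH : x ∈ H) (hx : orderOf x = p) (hmax : ∀ u ∈ H, x ∈ zpowers u → u ∈ zpowers x) :
    ∃ z, orderOf z = p ∧ Commute x z ∧ z ∉ zpowers x := by
  obtain ⟨z, hz, hxz, hzx⟩ := hH.exists_commute_notMem_zpowers hcard (x := ⟨x, hxH⟩)
    (by rwa [orderOf_mk]) fun u hu =>
      coe_mem_zpowers_coe_iff.1 (hmax u u.2 (coe_mem_zpowers_coe_iff.2 hu))
  exact ⟨z, by rwa [orderOf_coe], congrArg Subtype.val hxz,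
    fun h => hzx (coe_mem_zpowers_coe_iff.1 h)⟩

end Finite

end

theorem sylow_p_cyclic_of_prime_graph_edge
    {G : Type*} [Group G] [Finite G]
    (hco : IsCograph (powerGraph G))
    {p q : ℕ} (hp : p.Prime) (hq : q.Prime) (hqp : q < p)
    (hedge : ∃ g : G, orderOf g = p * q) :
    ∀ P : Sylow p G, Nat.card (P : Subgroup G) = p := by
  intro P
  have := Fact.mk hp
  have := Fact.mk hq
  obtain ⟨g, hg⟩ := hedge
  obtain ⟨x, y, hx, hy, hxy⟩ :=
    exists_commute_orderOf_eq_of_orderOf_eq_mul hg hp.ne_zero hq.ne_zero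
  have hx1 : x ≠ 1 := (orderOf_eq_prime_iff.1 hx).2
  have hy1 : y ≠ 1 := (orderOf_eq_prime_iff.1 hy).2
  have hpq : p.Coprime q := (Nat.coprime_primes hp hq).2 hqp.ne'
  have hxp : IsPGroup p (zpowers x) :=
    IsPGroup.of_card (n := 1) (by rw [Nat.card_zpowers, hx, pow_one])
  obtain ⟨P', hxP'⟩ := hxp.exists_le_sylow
  rw [P.card_eq_multiplicity, ← P'.card_eq_multiplicity]
  by_contra hne
  obtain ⟨z, hz, hxz, hzx⟩ := P'.isPGroup'.exists_commute_notMem_zpowers_of_mem hne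
    (hxP' (mem_zpowers x)) hx fun u hu hxu =>
      hco.mem_zpowers_of_mem_zpowers_of_commute hxy (hx ▸ hy ▸ hpq)
        (hy ▸ by simpa using P'.isPGroup'.orderOf_coprime hpq ⟨u, hu⟩) hx1 hy1 hxu
  have hconj_ord : orderOf (z * y * z⁻¹) = q := by
    simpa [hy] using MulEquiv.orderOf_eq (MulAut.conj z) y
  have hconj : z * y * z⁻¹ ∈ zpowers y :=
    hco.mem_zpowers_of_commute ((hxz.mul_right hxy).mul_right hxz.inv_right) hxy
      (hconj_ord.trans hy.symm) (hx ▸ hconj_ord ▸ hpq) (by simpa using hy1) hx1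
  have hzy : Commute z y := commute_of_conj_mem_zpowers hconj <| by
    rw [hz, hy, Nat.totient_prime hq]
    exact hp.coprime_iff_not_dvd.2
      (Nat.not_dvd_of_pos_of_lt (Nat.sub_pos_of_lt hq.one_lt) (by omega))
  exact hzx (hco.mem_zpowers_of_commute hzy.symm hxy.symm (hz.trans hx.symm)
    (hy ▸ hz ▸ hpq.symm) (orderOf_eq_prime_iff.1 hz).2 hy1)
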